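/- Let A be a closed subalgebra of C(X) for X compact Hausdorff, separating points and containing constants, and let H be a closed subset of X. Then the restriction algebra A↾H = {f↾H : f ∈ A} is closed in C(H) if and only if there is a finite constant c ≥ 1 such that for all f ∈ A there is f* ∈ A with f↾H = f*↾H and ‖f*‖ ≤ c·‖f‖_H, where ‖f‖_H = sup{|f(x)| : x ∈ H}. -/

import Mathlib

/-!
The restriction map `A → C(H)` is a bounded linear map out of the Banach space `A`. If its range
is closed, the range is itself a Banach space and the open mapping theorem yields lifts with
controlled norm. Conversely, controlled lifts of a dense subgroup extend to its closure by lifting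
a rapidly convergent series term by term (`controlled_closure_of_complete`), so the range contains
its closure.
-/

open Set

/-- The restriction algebra `A↾H = {f↾H : f ∈ A}`, as a set of continuous functions on `H`. -/
def restrictSet {X : Type*} [TopologicalSpace X] (A : Subalgebra ℂ C(X, ℂ)) (H : Set X) :
    Set C(H, ℂ) :=
  {g | ∃ f ∈ A, f.restrict H = g}

/-- `‖f‖_H = sup {|f x| : x ∈ H}`. -/
noncomputable def supNormOn {X : Type*} [TopologicalSpace X] (f : C(X, ℂ)) (H : Set X) : ℝ :=
  sSup ((fun x => ‖f x‖) '' H)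

namespace ContinuousLinearMap

variable {𝕜 E F : Type*} [NontriviallyNormedField 𝕜] [NormedAddCommGroup E] [NormedSpace 𝕜 E]
  [CompleteSpace E] [NormedAddCommGroup F] [NormedSpace 𝕜 F]

theorem isClosed_range_of_exists_norm_le (T : E →L[𝕜] F)
    (h : ∃ C > 0, ∀ x, ∃ x', T x' = T x ∧ ‖x'‖ ≤ C * ‖T x‖) : IsClosed (range T) := by
  obtain ⟨C, hC, hlift⟩ := h
  let T' := T.toLinearMap.toAddMonoidHom.mkNormedAddGroupHom ‖T‖ T.le_opNorm
  have hK : T'.SurjectiveOnWith (LinearMap.range T.toLinearMap).toAddSubgroup C := by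
    rintro _ ⟨x, rfl⟩
    exact hlift x
  refine isClosed_of_closure_subset fun y hy => ?_
  obtain ⟨x, hx, -⟩ := controlled_closure_of_complete hC one_pos hK y hy
  exact ⟨x, hx⟩

theorem exists_norm_le_of_isClosed_range [CompleteSpace F] (T : E →L[𝕜] F)
    (h : IsClosed (range T)) : ∃ C > 0, ∀ x, ∃ x', T x' = T x ∧ ‖x'‖ ≤ C * ‖T x‖ := by
  have : CompleteSpace (LinearMap.range T.toLinearMap) := h.completeSpace_coe
  obtain ⟨C, hC, hpre⟩ := T.rangeRestrict.exists_preimage_norm_le T.surjective_rangeRestrict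
  refine ⟨C, hC, fun x => ?_⟩
  obtain ⟨x', hx', hnorm⟩ := hpre (T.rangeRestrict x)
  exact ⟨x', congrArg Subtype.val hx', hnorm⟩

theorem isClosed_range_iff_exists_norm_le [CompleteSpace F] (T : E →L[𝕜] F) :
    IsClosed (range T) ↔ ∃ C > 0, ∀ x, ∃ x', T x' = T x ∧ ‖x'‖ ≤ C * ‖T x‖ :=
  ⟨T.exists_norm_le_of_isClosed_range, T.isClosed_range_of_exists_norm_le⟩

end ContinuousLinearMap

namespace ContinuousMap

variable {X : Type*} [TopologicalSpace X] [CompactSpace X] (𝕜 : Type*) {E : Type*}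
  [NontriviallyNormedField 𝕜] [NormedAddCommGroup E] [NormedSpace 𝕜 E]

theorem norm_restrict_le (H : Set X) [CompactSpace H] (f : C(X, E)) : ‖f.restrict H‖ ≤ ‖f‖ :=
  (norm_le _ (norm_nonneg f)).2 fun x => f.norm_coe_le_norm x

noncomputable def restrictL (H : Set X) [CompactSpace H] : C(X, E) →L[𝕜] C(H, E) :=
  LinearMap.mkContinuous
    { toFun := fun f => f.restrict H
      map_add' := fun _ _ => rfl
      map_smul' := fun _ _ => rfl }
    1 fun f => (one_mul ‖f‖).symm ▸ norm_restrict_le H f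

end ContinuousMap

theorem supNormOn_eq_norm_restrict {X : Type*} [TopologicalSpace X] (H : Set X)
    [CompactSpace H] (f : C(X, ℂ)) : supNormOn f H = ‖f.restrict H‖ := by
  rw [ContinuousMap.norm_eq_iSup_norm, supNormOn, Set.image_eq_range, iSup]
  rfl

theorem stmt2_general {X : Type*} [TopologicalSpace X] [CompactSpace X]
    (A : Subalgebra ℂ C(X, ℂ))
    (hAcl : IsClosed (A : Set C(X, ℂ)))
    (H : Set X) (hH : IsClosed H) :
    IsClosed (restrictSet A H) ↔
      ∃ c : ℝ, 1 ≤ c ∧ ∀ f ∈ A, ∃ fs ∈ A,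
        f.restrict H = fs.restrict H ∧ ‖fs‖ ≤ c * supNormOn f H := by
  have : CompactSpace H := isCompact_iff_compactSpace.mp hH.isCompact
  have : CompleteSpace (Subalgebra.toSubmodule A) := hAcl.completeSpace_coe
  let T := (ContinuousMap.restrictL ℂ H).comp (Subalgebra.toSubmodule A).subtypeL
  have hrange : range T = restrictSet A H := by
    ext g; exact ⟨fun ⟨f, hf⟩ => ⟨f, f.2, hf⟩, fun ⟨f, hf, hfg⟩ => ⟨⟨f, hf⟩, hfg⟩⟩
  rw [← hrange, T.isClosed_range_iff_exists_norm_le]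
  constructor
  · rintro ⟨C, -, hC⟩
    refine ⟨max C 1, le_max_right _ _, fun f hf => ?_⟩
    obtain ⟨⟨fs, hfs⟩, hres, hnorm⟩ := hC ⟨f, hf⟩
    refine ⟨fs, hfs, hres.symm, ?_⟩
    rw [supNormOn_eq_norm_restrict]
    exact hnorm.trans (mul_le_mul_of_nonneg_right (le_max_left _ _) (norm_nonneg _))
  · rintro ⟨c, hc, hlift⟩
    refine ⟨c, one_pos.trans_le hc, fun ⟨f, hf⟩ => ?_⟩
    obtain ⟨fs, hfs, hres, hnorm⟩ := hlift f hf
    exact ⟨⟨fs, hfs⟩, hres.symm, (supNormOn_eq_norm_restrict H f) ▸ hnorm⟩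

/-- For a closed subalgebra `A ≤ C(X, ℂ)` and a closed `H ⊆ X`, the restriction `A↾H` is
closed in `C(H, ℂ)` iff there is a constant `c ≥ 1` such that every `f ∈ A` admits
`f* ∈ A` with `f↾H = f*↾H` and `‖f*‖ ≤ c ‖f‖_H`. -/
theorem stmt2 {X : Type*} [TopologicalSpace X] [CompactSpace X] [T2Space X]
    (A : Subalgebra ℂ C(X, ℂ)) (hA : A.SeparatesPoints)
    (hAcl : IsClosed (A : Set C(X, ℂ)))
    (H : Set X) (hH : IsClosed H) :
    IsClosed (restrictSet A H) ↔
      ∃ c : ℝ, 1 ≤ c ∧ ∀ f ∈ A, ∃ fs ∈ A,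
        f.restrict H = fs.restrict H ∧ ‖fs‖ ≤ c * supNormOn f H :=
  stmt2_general A hAcl H hH
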